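/- Let S₁ ⊆ ℤ⁷ be the 27-point set consisting of perm₆(−1,0,0,0,0,0) with seventh coordinate 1, perm₆(0,1,1,1,1,1) with seventh coordinate −3, and perm₆(1,1,0,0,0,0) with seventh coordinate −1; let S₂ be the 6-point set perm₆(1,0,0,0,0,0) with seventh coordinate 0; and let S₃ = {(0,…,0), (1,1,1,1,1,1,−4)}. Then: (i) S₁, S₂, S₃ lie respectively in the three pairwise disjoint parallel hyperplanes 2(x₁+⋯+x₆)+3x₇ = 1, 2, 0 (so the 35-tope has lamina number at most 3); (ii) there exist a bijection φ: S₁ → S₆ and a constant λ > 0 with Q_{ER7}[u−v] = λ·Q_{E6}[φ(u)−φ(v)] for all u, v ∈ S₁ (S₁ is, up to scaling, isometric to the vertex set of the Gosset polytope G₆); and (iii) Q_{ER7}[u−v] = 4 for all distinct u, v ∈ S₂ (S₂ is the vertex set of a regular 5-simplex). -/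

import Mathlib

open Matrix

/-- Cast an integer vector to a real vector. -/
def vR {n : ℕ} (v : Fin n → ℤ) : Fin n → ℝ := fun i => (v i : ℝ)

/-- The quadratic form `Q_A[x] = xᵀ A x`. -/
def Qf {n : ℕ} (A : Matrix (Fin n) (Fin n) ℝ) (x : Fin n → ℝ) : ℝ :=
  x ⬝ᵥ A.mulVec x

/-- The Erdahl–Rybnikov Gram matrix `ER₇`. -/
def ER7 : Matrix (Fin 7) (Fin 7) ℝ :=
  !![8, 6, 6, 6, 6, 6, 9;
     6, 8, 6, 6, 6, 6, 9;
     6, 6, 8, 6, 6, 6, 9;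
     6, 6, 6, 8, 6, 6, 9;
     6, 6, 6, 6, 8, 6, 9;
     6, 6, 6, 6, 6, 8, 9;
     9, 9, 9, 9, 9, 9, 13]

/-- The Gram matrix of type `E₆` used in the paper. -/
def E6 : Matrix (Fin 6) (Fin 6) ℝ :=
  !![4, 3, 3, 3, 3, 5;
     3, 4, 3, 3, 3, 5;
     3, 3, 4, 3, 3, 5;
     3, 3, 3, 4, 3, 5;
     3, 3, 3, 3, 4, 5;
     5, 5, 5, 5, 5, 8]

/-- The center of the Delaunay ellipsoid of the Gosset polytope `G₆`. -/
noncomputable def c6 : Fin 6 → ℝ := ![1/3, 1/3, 1/3, 1/3, 1/3, -2/3]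

/-- The 27 vertices of the Gosset polytope `G₆` in `ℤ⁶`. -/
def S6 : Set (Fin 6 → ℤ) :=
  {Fin.snoc ![1, 1, 1, 1, 1] (-3)} ∪
  {v | ∃ σ : Equiv.Perm (Fin 5), v = Fin.snoc (![0, 1, 1, 1, 1] ∘ σ) (-2)} ∪
  {v | ∃ σ : Equiv.Perm (Fin 5), v = Fin.snoc (![1, 1, 0, 0, 0] ∘ σ) (-1)} ∪
  {0} ∪
  {v | ∃ σ : Equiv.Perm (Fin 5), v = Fin.snoc (![1, 0, 0, 0, 0] ∘ σ) 0} ∪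
  {v | ∃ σ : Equiv.Perm (Fin 5), v = Fin.snoc (![-1, 0, 0, 0, 0] ∘ σ) 1}

/-- The Gosset layer of the 35-tope: 27 points. -/
def T1 : Set (Fin 7 → ℤ) :=
  {v | ∃ σ : Equiv.Perm (Fin 6), v = Fin.snoc (![-1, 0, 0, 0, 0, 0] ∘ σ) 1} ∪
  {v | ∃ σ : Equiv.Perm (Fin 6), v = Fin.snoc (![0, 1, 1, 1, 1, 1] ∘ σ) (-3)} ∪
  {v | ∃ σ : Equiv.Perm (Fin 6), v = Fin.snoc (![1, 1, 0, 0, 0, 0] ∘ σ) (-1)}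

/-- The 5-simplex layer of the 35-tope: 6 points. -/
def T2 : Set (Fin 7 → ℤ) :=
  {v | ∃ σ : Equiv.Perm (Fin 6), v = Fin.snoc (![1, 0, 0, 0, 0, 0] ∘ σ) 0}

/-- The 1-simplex layer of the 35-tope: 2 points. -/
def T3 : Set (Fin 7 → ℤ) :=
  {0} ∪ {Fin.snoc ![1, 1, 1, 1, 1, 1] (-4)}

/-!
On the hyperplane `lamina = 0` the integral linear map `gossetMap` is a similarity of ratio 2
from `Q_{ER7}` to `Q_{E6}`: after expanding both forms, `Q_{ER7}(x) - 2 Q_{E6}(gossetMap x)` is a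
multiple of `lamina x`. Since `T1` lies in the hyperplane `lamina = 1`, differences of its points
lie in `lamina = 0`; moreover `gossetMap` together with `lamina` is injective, and `gossetMap`
carries `T1` onto `S6`, a finite check once each permutation orbit is rewritten as a family
indexed by the positions of its distinguished coordinates. The layer `T2` consists of the first
six unit vectors, and `Q_{ER7}(eᵢ - eⱼ) = 8 + 8 - 6 - 6 = 4`.
-/

open Function Equiv

section PermOrbit

variable {ι α : Type*} [DecidableEq ι]

theorem exists_perm_update_comp_iff (P : (ι → α) → Prop) (z m : α) (i : ι) :
    (∃ σ : Perm ι, P (update (const ι z) i m ∘ σ)) ↔ ∃ j, P (update (const ι z) j m) := by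
  constructor
  · rintro ⟨σ, h⟩
    rw [update_comp_equiv] at h
    exact ⟨σ.symm i, h⟩
  · rintro ⟨j, h⟩
    refine ⟨swap i j, ?_⟩
    rwa [update_comp_equiv, symm_swap, swap_apply_left]

theorem exists_perm_symm_apply_eq_pair {i i' a b : ι} (hi : i ≠ i') (hab : a ≠ b) :
    ∃ σ : Perm ι, σ.symm i = a ∧ σ.symm i' = b := by
  have hc : swap i a b ≠ i := fun h => hab (by rw [← swap_apply_self i a b, h, swap_apply_left])
  refine ⟨(swap i a * swap i' (swap i a b)).symm, ?_, ?_⟩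
  · rw [symm_symm, Perm.mul_apply, swap_apply_of_ne_of_ne hi hc.symm, swap_apply_left]
  · rw [symm_symm, Perm.mul_apply, swap_apply_left, swap_apply_self]

theorem exists_perm_update₂_comp_iff (P : (ι → α) → Prop) (z m : α) {i i' : ι} (hi : i ≠ i') :
    (∃ σ : Perm ι, P (update (update (const ι z) i m) i' m ∘ σ)) ↔
      ∃ a b, a ≠ b ∧ P (update (update (const ι z) a m) b m) := by
  constructor
  · rintro ⟨σ, h⟩
    rw [update_comp_equiv, update_comp_equiv] at h
    exact ⟨σ.symm i, σ.symm i', σ.symm.injective.ne hi, h⟩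
  · rintro ⟨a, b, hab, h⟩
    obtain ⟨σ, ha, hb⟩ := exists_perm_symm_apply_eq_pair hi hab
    refine ⟨σ, ?_⟩
    rwa [update_comp_equiv, update_comp_equiv, ha, hb]

end PermOrbit

theorem Fin.snoc_update_const_zero {α : Type*} [Zero α] {n : ℕ} (j : Fin n) (m : α) :
    (Fin.snoc (update (const (Fin n) 0) j m) 0 : Fin (n + 1) → α) = Pi.single j.castSucc m := by
  ext k
  cases k using Fin.lastCases <;> simp [Pi.single_apply, update_apply]

theorem Qf_single_sub_single {n : ℕ} (A : Matrix (Fin n) (Fin n) ℝ) (i j : Fin n) :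
    Qf A (Pi.single i 1 - Pi.single j 1) = A i i + A j j - A i j - A j i := by
  simp only [Qf, mulVec_sub, mulVec_single, MulOpposite.op_one, one_smul, dotProduct_sub,
    sub_dotProduct, single_dotProduct, col_apply, one_mul]
  ring

theorem vR_sub {n : ℕ} (u v : Fin n → ℤ) : vR (u - v) = vR u - vR v := by
  ext i
  simp only [vR, Pi.sub_apply, Int.cast_sub]

theorem vR_single {n : ℕ} (k : Fin n) : vR (Pi.single k 1) = Pi.single k 1 := by
  ext i
  simp [vR, Pi.single_apply]

theorem Qf_ER7_eq (x : Fin 7 → ℝ) :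
    Qf ER7 x = 6 * (x 0 + x 1 + x 2 + x 3 + x 4 + x 5) ^ 2
      + 2 * (x 0 ^ 2 + x 1 ^ 2 + x 2 ^ 2 + x 3 ^ 2 + x 4 ^ 2 + x 5 ^ 2)
      + 18 * (x 0 + x 1 + x 2 + x 3 + x 4 + x 5) * x 6 + 13 * x 6 ^ 2 := by
  simp only [Qf, ER7, dotProduct, mulVec, Fin.sum_univ_succ, Fin.sum_univ_zero, of_apply, cons_val',
    cons_val_zero, cons_val_fin_one, Fin.succ_zero_eq_one, cons_val_one, Fin.succ_one_eq_two,
    cons_val, Fin.reduceSucc, add_zero]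
  ring

theorem Qf_E6_eq (y : Fin 6 → ℝ) :
    Qf E6 y = 3 * (y 0 + y 1 + y 2 + y 3 + y 4) ^ 2
      + (y 0 ^ 2 + y 1 ^ 2 + y 2 ^ 2 + y 3 ^ 2 + y 4 ^ 2)
      + 10 * (y 0 + y 1 + y 2 + y 3 + y 4) * y 5 + 8 * y 5 ^ 2 := by
  simp only [Qf, E6, dotProduct, mulVec, Fin.sum_univ_succ, Fin.sum_univ_zero, of_apply, cons_val',
    cons_val_zero, cons_val_fin_one, Fin.succ_zero_eq_one, cons_val_one, Fin.succ_one_eq_two,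
    cons_val, Fin.reduceSucc, add_zero]
  ring

theorem ER7_castSucc_castSucc (a b : Fin 6) :
    ER7 a.castSucc b.castSucc = if a = b then 8 else 6 := by
  fin_cases a <;> fin_cases b <;> simp [ER7]

section Lamina

variable {R : Type*} [CommRing R]

def lamina (v : Fin 7 → R) : R :=
  2 * (v 0 + v 1 + v 2 + v 3 + v 4 + v 5) + 3 * v 6

def gossetMap (v : Fin 7 → R) : Fin 6 → R :=
  let s := v 0 + v 1 + v 2 + v 3 + v 4 + v 5
  ![s + v 1 + 2 * v 6, s + v 2 + 2 * v 6, s + v 3 + 2 * v 6, s + v 4 + 2 * v 6,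
    s + v 5 + 2 * v 6, v 0 - 3 * s - 5 * v 6]

theorem lamina_sub (x y : Fin 7 → R) : lamina (x - y) = lamina x - lamina y := by
  simp only [lamina, Pi.sub_apply]
  ring

theorem gossetMap_sub (x y : Fin 7 → R) : gossetMap (x - y) = gossetMap x - gossetMap y := by
  ext i
  fin_cases i <;>
    simp only [gossetMap, Pi.sub_apply, Fin.zero_eta, Fin.mk_one, Fin.reduceFinMk, cons_val_zero,
      cons_val_one, cons_val] <;>
    ring

end Lamina

theorem lamina_vR (v : Fin 7 → ℤ) : lamina (vR v) = lamina v := by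
  simp [lamina, vR]

theorem vR_gossetMap (v : Fin 7 → ℤ) : vR (gossetMap v) = gossetMap (vR v) := by
  ext i
  fin_cases i <;> simp [vR, gossetMap]

theorem Qf_ER7_eq_two_mul_Qf_E6_gossetMap (x : Fin 7 → ℝ) (hx : lamina x = 0) :
    Qf ER7 x = 2 * Qf E6 (gossetMap x) := by
  rw [Qf_ER7_eq, Qf_E6_eq]
  simp only [lamina] at hx
  simp only [gossetMap, cons_val_zero, cons_val_one, cons_val]
  linear_combination (-8 * x 0 - 4 * x 1 - 4 * x 2 - 4 * x 3 - 4 * x 4 - 4 * x 5 - 9 * x 6) * hx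

theorem eq_of_lamina_eq_of_gossetMap_eq {u v : Fin 7 → ℤ} (hl : lamina u = lamina v)
    (hg : gossetMap u = gossetMap v) : u = v := by
  have h0 := congrFun hg 0
  have h1 := congrFun hg 1
  have h2 := congrFun hg 2
  have h3 := congrFun hg 3
  have h4 := congrFun hg 4
  have h5 := congrFun hg 5
  simp only [gossetMap, cons_val_zero, cons_val_one, cons_val] at h0 h1 h2 h3 h4 h5
  simp only [lamina] at hl
  ext i
  fin_cases i <;> simp only [Fin.zero_eta, Fin.mk_one, Fin.reduceFinMk] <;> omega

def T1Finset : Finset (Fin 7 → ℤ) :=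
  Finset.univ.image (fun j => Fin.snoc (update (const _ 0) j (-1)) 1) ∪
  Finset.univ.image (fun j => Fin.snoc (update (const _ 1) j 0) (-3)) ∪
  (Finset.univ.filter (fun p : Fin 6 × Fin 6 => p.1 ≠ p.2)).image
    (fun p => Fin.snoc (update (update (const _ 0) p.1 1) p.2 1) (-1))

def S6Finset : Finset (Fin 6 → ℤ) :=
  {Fin.snoc ![1, 1, 1, 1, 1] (-3)} ∪
  Finset.univ.image (fun j => Fin.snoc (update (const _ 1) j 0) (-2)) ∪
  (Finset.univ.filter (fun p : Fin 5 × Fin 5 => p.1 ≠ p.2)).image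
    (fun p => Fin.snoc (update (update (const _ 0) p.1 1) p.2 1) (-1)) ∪
  {0} ∪
  Finset.univ.image (fun j => Fin.snoc (update (const _ 0) j 1) 0) ∪
  Finset.univ.image (fun j => Fin.snoc (update (const _ 0) j (-1)) 1)

theorem coe_T1Finset : (T1Finset : Set (Fin 7 → ℤ)) = T1 := by
  ext v
  simp only [T1, T1Finset, Set.mem_union, Set.mem_ofPred_eq, Finset.coe_union, Finset.coe_image,
    Finset.coe_filter, Finset.coe_univ, Set.image_univ, Set.mem_range, Set.mem_image,
    Finset.mem_univ, true_and, Prod.exists, eq_comm (a := v)]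
  rw [show (![-1, 0, 0, 0, 0, 0] : Fin 6 → ℤ) = update (const _ 0) 0 (-1) by decide,
    show (![0, 1, 1, 1, 1, 1] : Fin 6 → ℤ) = update (const _ 1) 0 0 by decide,
    show (![1, 1, 0, 0, 0, 0] : Fin 6 → ℤ) = update (update (const _ 0) 0 1) 1 1 by decide]
  refine or_congr (or_congr ?_ ?_) ?_
  · exact (exists_perm_update_comp_iff (fun x => Fin.snoc x 1 = v) _ _ _).symm
  · exact (exists_perm_update_comp_iff (fun x => Fin.snoc x (-3) = v) _ _ _).symm
  · exact (exists_perm_update₂_comp_iff (fun x => Fin.snoc x (-1) = v) _ _ (by decide)).symm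

theorem coe_S6Finset : (S6Finset : Set (Fin 6 → ℤ)) = S6 := by
  ext v
  simp only [S6, S6Finset, Set.mem_union, Set.mem_ofPred_eq, Set.mem_singleton_iff,
    Finset.coe_union, Finset.coe_image, Finset.coe_filter, Finset.coe_univ, Finset.coe_singleton,
    Set.image_univ, Set.mem_range, Set.mem_image, Finset.mem_univ, true_and, Prod.exists,
    eq_comm (a := v)]
  rw [show (![0, 1, 1, 1, 1] : Fin 5 → ℤ) = update (const _ 1) 0 0 by decide,
    show (![1, 1, 0, 0, 0] : Fin 5 → ℤ) = update (update (const _ 0) 0 1) 1 1 by decide,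
    show (![1, 0, 0, 0, 0] : Fin 5 → ℤ) = update (const _ 0) 0 1 by decide,
    show (![-1, 0, 0, 0, 0] : Fin 5 → ℤ) = update (const _ 0) 0 (-1) by decide]
  refine or_congr (or_congr (or_congr (or_congr (or_congr Iff.rfl ?_) ?_) Iff.rfl) ?_) ?_
  · exact (exists_perm_update_comp_iff (fun x => Fin.snoc x (-2) = v) _ _ _).symm
  · exact (exists_perm_update₂_comp_iff (fun x => Fin.snoc x (-1) = v) _ _ (by decide)).symm
  · exact (exists_perm_update_comp_iff (fun x => Fin.snoc x 0 = v) _ _ _).symm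
  · exact (exists_perm_update_comp_iff (fun x => Fin.snoc x 1 = v) _ _ _).symm

theorem T2_eq_range : T2 = Set.range (fun j : Fin 6 => (Pi.single j.castSucc 1 : Fin 7 → ℤ)) := by
  ext v
  simp only [T2, Set.mem_ofPred_eq, Set.mem_range, ← Fin.snoc_update_const_zero,
    eq_comm (a := v)]
  rw [show (![1, 0, 0, 0, 0, 0] : Fin 6 → ℤ) = update (const _ 0) 0 1 by decide]
  exact exists_perm_update_comp_iff (fun x => Fin.snoc x 0 = v) _ _ _

theorem image_gossetMap_T1Finset : T1Finset.image gossetMap = S6Finset := by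
  decide

theorem lamina_of_mem_T1 : ∀ v ∈ T1, lamina v = 1 := by
  rw [← coe_T1Finset]
  decide

theorem lamina_of_mem_T2 : ∀ v ∈ T2, lamina v = 2 := by
  rw [T2_eq_range]
  rintro _ ⟨j, rfl⟩
  revert j
  decide

theorem lamina_of_mem_T3 : ∀ v ∈ T3, lamina v = 0 := by
  rintro v (rfl | rfl) <;> decide

theorem bijOn_gossetMap_T1_S6 : Set.BijOn gossetMap T1 S6 := by
  have hinj : Set.InjOn gossetMap T1 := fun u hu v hv h =>
    eq_of_lamina_eq_of_gossetMap_eq (by rw [lamina_of_mem_T1 u hu, lamina_of_mem_T1 v hv]) h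
  have himage : gossetMap '' T1 = S6 := by
    rw [← coe_T1Finset, ← Finset.coe_image, image_gossetMap_T1Finset, coe_S6Finset]
  exact himage ▸ hinj.bijOn_image

theorem Qf_ER7_sub_of_mem_T1 {u v : Fin 7 → ℤ} (hu : u ∈ T1) (hv : v ∈ T1) :
    Qf ER7 (vR u - vR v) = 2 * Qf E6 (vR (gossetMap u) - vR (gossetMap v)) := by
  have hlam : lamina (vR (u - v)) = 0 := by
    rw [lamina_vR, lamina_sub, lamina_of_mem_T1 u hu, lamina_of_mem_T1 v hv, sub_self,
      Int.cast_zero]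
  rw [← vR_sub, ← vR_sub, ← gossetMap_sub, vR_gossetMap, Qf_ER7_eq_two_mul_Qf_E6_gossetMap _ hlam]

theorem Qf_ER7_sub_of_mem_T2 {u v : Fin 7 → ℤ} (hu : u ∈ T2) (hv : v ∈ T2) (hne : u ≠ v) :
    Qf ER7 (vR u - vR v) = 4 := by
  rw [T2_eq_range] at hu hv
  obtain ⟨a, rfl⟩ := hu
  obtain ⟨b, rfl⟩ := hv
  have hab : a ≠ b := fun h => hne (h ▸ rfl)
  rw [vR_single, vR_single, Qf_single_sub_single, ER7_castSucc_castSucc, ER7_castSucc_castSucc,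
    ER7_castSucc_castSucc, ER7_castSucc_castSucc, if_pos rfl, if_pos rfl, if_neg hab,
    if_neg hab.symm]
  norm_num

/-- The vertex set of the 35-tope splits into three laminae lying in the
parallel hyperplanes `2(x₁+⋯+x₆)+3x₇ = 1, 2, 0`; the first is, up to scaling,
isometric to the Gosset polytope `G₆`, and the second is a regular 5-simplex. -/
theorem stmt_13 :
    -- (i) the three laminae lie in three pairwise disjoint parallel hyperplanes
    (∀ v ∈ T1, 2 * (v 0 + v 1 + v 2 + v 3 + v 4 + v 5) + 3 * v 6 = 1) ∧
    (∀ v ∈ T2, 2 * (v 0 + v 1 + v 2 + v 3 + v 4 + v 5) + 3 * v 6 = 2) ∧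
    (∀ v ∈ T3, 2 * (v 0 + v 1 + v 2 + v 3 + v 4 + v 5) + 3 * v 6 = 0) ∧
    -- (ii) T1 is, up to scaling, isometric to the vertex set of G₆
    (∃ φ : (Fin 7 → ℤ) → (Fin 6 → ℤ), Set.BijOn φ T1 S6 ∧
      ∃ l : ℝ, 0 < l ∧ ∀ u ∈ T1, ∀ v ∈ T1,
        Qf ER7 (vR u - vR v) = l * Qf E6 (vR (φ u) - vR (φ v))) ∧
    -- (iii) T2 is the vertex set of a regular 5-simplex
    (∀ u ∈ T2, ∀ v ∈ T2, u ≠ v → Qf ER7 (vR u - vR v) = 4) :=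
  ⟨lamina_of_mem_T1, lamina_of_mem_T2, lamina_of_mem_T3,
    ⟨gossetMap, bijOn_gossetMap_T1_S6, 2, two_pos, fun _ hu _ hv => Qf_ER7_sub_of_mem_T1 hu hv⟩,
    fun _ hu _ hv => Qf_ER7_sub_of_mem_T2 hu hv⟩
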